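/- Let p ∈ L²(ℝ) be compactly supported. If there exists a compactly supported orthogonal generator for S(p), then it is unique up to an integer shift and multiplication by a nonzero scalar: any two nonzero compactly supported functions f₁, f₂ ∈ L²(ℝ) whose integer translates are mutually orthogonal and whose shift-invariant closed spans both equal S(p) satisfy f₂ = c · f₁(· − n) for some c ∈ ℂ \ {0} and n ∈ ℤ. -/

import Mathlib

/-!
Translation by integers makes `L²(ℝ)` a module over the Laurent polynomials `ℂ[ℤ]`, and `S(f)` is
the closure of `ℂ[ℤ] • f`. If `f` has orthogonal translates and `f, g` have compact support, only
finitely many coefficients `⟪f(· - n), g⟫` are nonzero, so `g ∈ S(f)` already gives `g = a • f` for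
a Laurent polynomial `a`. Applied in both directions this yields `f₁ = (b * a) • f₁`, and since
orthogonal translates are linearly independent, `b * a = 1`. The units of `ℂ[ℤ]` are monomials
`c Xⁿ`: extreme terms of a product are products of extreme terms.
-/

open MeasureTheory Complex Filter Topology
open scoped Real ENNReal

noncomputable section

/-- The integer translate `f(· − n)` of `f ∈ L²(ℝ)` as an element of `L²(ℝ)`. -/
def translateLp (f : ℝ → ℂ) (hf : MemLp f 2 (volume : Measure ℝ)) (n : ℤ) :
    Lp ℂ 2 (volume : Measure ℝ) :=
  (hf.comp_measurePreserving (measurePreserving_sub_right volume (n : ℝ))).toLp _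

/-- `S(f)`: the `L²`-closure of the span of the integer translates of `f`. -/
def spanTranslates (f : ℝ → ℂ) (hf : MemLp f 2 (volume : Measure ℝ)) :
    Submodule ℂ (Lp ℂ 2 (volume : Measure ℝ)) :=
  (Submodule.span ℂ (Set.range (translateLp f hf))).topologicalClosure

open scoped InnerProductSpace Pointwise

namespace AddMonoidAlgebra

variable {R G : Type*} [Semiring R] [NoZeroDivisors R] [AddMonoid G] [TwoUniqueSums G]

theorem exists_eq_single_of_mul_eq_one {x y : R[G]} (h : x * y = 1) :
    ∃ g r, x = single g r := by
  classical
  by_cases hx : x.coeff.support.card ≤ 1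
  · have : Nonempty G := ⟨0⟩
    obtain ⟨g, r, hgr⟩ := Finsupp.card_support_le_one'.mp hx
    exact ⟨g, r, by rw [← coeff_inj, coeff_single, hgr]⟩
  exfalso
  have hy : y.coeff.support.Nonempty := by
    rw [Finsupp.support_nonempty_iff, Ne, coeff_eq_zero]
    rintro rfl
    have := subsingleton_of_zero_eq_one ((mul_zero x).symm.trans h)
    simp [Subsingleton.elim x 0] at hx
  obtain ⟨p, hp, q, hq, hpq, hup, huq⟩ := TwoUniqueSums.uniqueAdd_of_one_lt_card
    (A := x.coeff.support) (B := y.coeff.support) (by nlinarith [hy.card_pos])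
  have hsum : ∀ u ∈ x.coeff.support ×ˢ y.coeff.support,
      UniqueAdd x.coeff.support y.coeff.support u.1 u.2 → u.1 + u.2 = 0 := by
    rintro u hu hun
    rw [Finset.mem_product, Finsupp.mem_support_iff, Finsupp.mem_support_iff] at hu
    have hcoeff := coeff_mul_add_of_uniqueAdd hun
    rw [h, one_def, coeff_single] at hcoeff
    by_contra h0
    rw [Finsupp.single_eq_of_ne h0] at hcoeff
    exact mul_ne_zero hu.1 hu.2 hcoeff.symm
  have hq' := Finset.mem_product.mp hq
  obtain ⟨h₁, h₂⟩ := hup hq'.1 hq'.2 ((hsum q hq huq).trans (hsum p hp hup).symm)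
  exact hpq (Prod.ext h₁.symm h₂.symm)

end AddMonoidAlgebra

section InnerProductSpace

variable {𝕜 E ι : Type*} [RCLike 𝕜] [NormedAddCommGroup E] [InnerProductSpace 𝕜 E]

theorem mem_span_range_of_mem_closure_of_inner_eq_zero {v : ι → E}
    (hv : Pairwise fun i j => ⟪v i, v j⟫_𝕜 = 0) {x : E}
    (hx : x ∈ (Submodule.span 𝕜 (Set.range v)).topologicalClosure) {s : Finset ι}
    (hs : ∀ i ∉ s, ⟪v i, x⟫_𝕜 = 0) : x ∈ Submodule.span 𝕜 (Set.range v) := by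
  classical
  set K := Submodule.span 𝕜 (Set.range v)
  -- the projection of `x` onto `span (v '' s)`; the coefficient is `0 / 0 = 0` when `v i = 0`
  set y := ∑ i ∈ s, (⟪v i, x⟫_𝕜 / ⟪v i, v i⟫_𝕜) • v i
  have hy : y ∈ K :=
    Submodule.sum_mem _ fun i _ => Submodule.smul_mem _ _ (Submodule.subset_span ⟨i, rfl⟩)
  have horth : x - y ∈ Kᗮ := by
    refine Submodule.orthogonal_le (Submodule.span_le.mpr ?_)
      (Submodule.le_orthogonal_orthogonal _ (Submodule.mem_span_singleton_self (x - y)))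
    rintro _ ⟨j, rfl⟩
    rw [SetLike.mem_coe, Submodule.mem_orthogonal_singleton_iff_inner_left, inner_sub_right,
      inner_sum, sub_eq_zero]
    by_cases hj : j ∈ s
    · rw [Finset.sum_eq_single_of_mem j hj fun i _ hij => by
        rw [inner_smul_right, hv hij.symm, mul_zero]]
      rcases eq_or_ne (v j) 0 with h0 | h0
      · simp [h0]
      · rw [inner_smul_right, div_mul_cancel₀ _ (inner_self_ne_zero.mpr h0)]
    · rw [hs j hj, Finset.sum_eq_zero fun i hi => by
        rw [inner_smul_right, hv (ne_of_mem_of_not_mem hi hj).symm, mul_zero]]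
  have hcl : x - y ∈ K.topologicalClosure :=
    K.topologicalClosure.sub_mem hx (K.le_topologicalClosure hy)
  rw [← Submodule.orthogonal_closure] at horth
  have hxy := (Submodule.mem_bot 𝕜).mp ((Submodule.inf_orthogonal_eq_bot _).le ⟨hcl, horth⟩)
  rwa [sub_eq_zero.mp hxy]

end InnerProductSpace

theorem MemLp.inner_toLp {α 𝕜 : Type*} [RCLike 𝕜] [MeasurableSpace α] {μ : Measure α}
    {f g : α → 𝕜} (hf : MemLp f 2 μ) (hg : MemLp g 2 μ) :
    ⟪hf.toLp f, hg.toLp g⟫_𝕜 = ∫ a, g a * starRingEnd 𝕜 (f a) ∂μ := by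
  rw [L2.inner_def]
  refine integral_congr_ae ?_
  filter_upwards [hf.coeFn_toLp, hg.coeFn_toLp] with a hfa hga
  rw [RCLike.inner_apply, hfa, hga]

def translationLp (m : ℤ) : Lp ℂ 2 (volume : Measure ℝ) →ₗ[ℂ] Lp ℂ 2 (volume : Measure ℝ) :=
  Lp.compMeasurePreservingₗ ℂ (fun t => t - (m : ℝ)) (measurePreserving_sub_right volume (m : ℝ))

theorem translateLp_eq_translationLp (f : ℝ → ℂ) (hf : MemLp f 2 (volume : Measure ℝ)) :
    translateLp f hf = fun n => translationLp n (hf.toLp f) :=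
  rfl

theorem coeFn_translateLp (f : ℝ → ℂ) (hf : MemLp f 2 (volume : Measure ℝ)) (n : ℤ) :
    translateLp f hf n =ᵐ[volume] fun t => f (t - n) :=
  MemLp.coeFn_toLp _

theorem translationLp_translationLp (m n : ℤ) (u : Lp ℂ 2 (volume : Measure ℝ)) :
    translationLp m (translationLp n u) = translationLp (m + n) u := by
  change Lp.compMeasurePreserving _ _ (Lp.compMeasurePreserving _ _ u) =
    Lp.compMeasurePreserving _ _ u
  rw [← Lp.compMeasurePreserving_comp_apply]
  congr 2
  funext t
  simp only [Function.comp_apply]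
  push_cast
  ring

theorem translationLp_zero (u : Lp ℂ 2 (volume : Measure ℝ)) : translationLp 0 u = u := by
  change Lp.compMeasurePreserving _ _ u = u
  convert Lp.compMeasurePreserving_id_apply u
  simp

open AddMonoidAlgebra

/-- `x • u` for the `ℂ[ℤ]`-module structure on `L²(ℝ)` in which `single n 1` acts as
`translationLp n`. -/
def laurentSMul (x : AddMonoidAlgebra ℂ ℤ) (u : Lp ℂ 2 (volume : Measure ℝ)) :
    Lp ℂ 2 (volume : Measure ℝ) :=
  Finsupp.linearCombination ℂ (fun n => translationLp n u) x.coeff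

theorem laurentSMul_single (n : ℤ) (c : ℂ) (u : Lp ℂ 2 (volume : Measure ℝ)) :
    laurentSMul (single n c) u = c • translationLp n u := by
  rw [laurentSMul, coeff_single, Finsupp.linearCombination_single]

theorem laurentSMul_one (u : Lp ℂ 2 (volume : Measure ℝ)) : laurentSMul 1 u = u := by
  rw [one_def, laurentSMul_single, one_smul, translationLp_zero]

theorem laurentSMul_mul (x y : AddMonoidAlgebra ℂ ℤ) (u : Lp ℂ 2 (volume : Measure ℝ)) :
    laurentSMul (x * y) u = laurentSMul x (laurentSMul y u) := by
  simp only [laurentSMul, mul_def, coeff_finsuppSum, coeff_single, map_finsuppSum,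
    Finsupp.linearCombination_apply, Finsupp.sum_single_index, zero_smul, map_smul,
    translationLp_translationLp, mul_smul, Finsupp.smul_sum]

theorem exists_laurentSMul_eq_of_mem_span {u v : Lp ℂ 2 (volume : Measure ℝ)}
    (hu : u ∈ Submodule.span ℂ (Set.range fun n => translationLp n v)) :
    ∃ x, laurentSMul x v = u := by
  obtain ⟨c, hc⟩ := Finsupp.mem_span_range_iff_exists_finsupp.mp hu
  exact ⟨ofCoeff c, by rw [laurentSMul, coeff_ofCoeff, Finsupp.linearCombination_apply, hc]⟩

theorem laurentSMul_left_injective {v : Lp ℂ 2 (volume : Measure ℝ)}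
    (hv : LinearIndependent ℂ fun n => translationLp n v) :
    Function.Injective fun x => laurentSMul x v :=
  fun _ _ h => coeff_injective (hv h)

section Translates

variable {f : ℝ → ℂ} (hf : MemLp f 2 (volume : Measure ℝ))

theorem pairwise_inner_translateLp_eq_zero
    (horth : ∀ n m : ℤ, n ≠ m → (∫ t : ℝ, f (t - n) * (starRingEnd ℂ) (f (t - m))) = 0) :
    Pairwise fun m n => ⟪translateLp f hf m, translateLp f hf n⟫_ℂ = 0 :=
  fun m n hmn => (MemLp.inner_toLp _ _).trans (horth n m hmn.symm)

theorem translateLp_ne_zero (hnf : ¬ f =ᵐ[volume] (fun _ => 0)) (n : ℤ) :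
    translateLp f hf n ≠ 0 := by
  intro h
  apply hnf
  have h0 : hf.toLp f = 0 := by
    rw [← norm_eq_zero,
      ← Lp.norm_compMeasurePreserving _ (measurePreserving_sub_right volume (n : ℝ))]
    exact norm_eq_zero.mpr h
  exact hf.coeFn_toLp.symm.trans (Lp.eq_zero_iff_ae_eq_zero.mp h0)

theorem linearIndependent_translateLp (hnf : ¬ f =ᵐ[volume] (fun _ => 0))
    (horth : Pairwise fun m n => ⟪translateLp f hf m, translateLp f hf n⟫_ℂ = 0) :
    LinearIndependent ℂ (translateLp f hf) :=
  linearIndependent_of_ne_zero_of_inner_eq_zero (translateLp_ne_zero hf hnf) horth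

theorem toLp_mem_spanTranslates : hf.toLp f ∈ spanTranslates f hf := by
  refine Submodule.le_topologicalClosure _ (Submodule.subset_span ⟨0, ?_⟩)
  simp only [translateLp_eq_translationLp, translationLp_zero]

variable {g : ℝ → ℂ} (hg : MemLp g 2 (volume : Measure ℝ))

theorem finite_setOf_inner_translateLp_ne_zero (hcf : HasCompactSupport f)
    (hcg : HasCompactSupport g) :
    {n : ℤ | ⟪translateLp f hf n, hg.toLp g⟫_ℂ ≠ 0}.Finite := by
  have hK : IsCompact (tsupport g - tsupport f) := by
    rw [← Set.sub_image_prod]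
    exact (hcg.isCompact.prod hcf.isCompact).image continuous_sub
  refine (Filter.mem_cofinite.mp (Int.tendsto_coe_cofinite hK.compl_mem_cocompact)).subset
    fun n hn hnK => hn ?_
  rw [translateLp, MemLp.inner_toLp]
  refine integral_eq_zero_of_ae (Eventually.of_forall fun t => ?_)
  by_contra h
  obtain ⟨hgt, hft⟩ := mul_ne_zero_iff.mp h
  exact hnK (Set.mem_sub.mpr
    ⟨t, subset_tsupport _ hgt, t - n, subset_tsupport _ (by simpa using hft), by ring⟩)

theorem exists_laurentSMul_eq_of_hasCompactSupport (hcf : HasCompactSupport f)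
    (hcg : HasCompactSupport g)
    (horth : Pairwise fun m n => ⟪translateLp f hf m, translateLp f hf n⟫_ℂ = 0)
    (hmem : hg.toLp g ∈ spanTranslates f hf) :
    ∃ x, laurentSMul x (hf.toLp f) = hg.toLp g := by
  have hspan := mem_span_range_of_mem_closure_of_inner_eq_zero horth hmem
    (s := (finite_setOf_inner_translateLp_ne_zero hf hg hcf hcg).toFinset)
    fun n hn => by simpa using hn
  rw [translateLp_eq_translationLp] at hspan
  exact exists_laurentSMul_eq_of_mem_span hspan

theorem ae_eq_smul_translate_of_toLp_eq {c : ℂ} {n : ℤ}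
    (h : hg.toLp g = c • translateLp f hf n) : g =ᵐ[volume] fun t => c * f (t - n) := by
  filter_upwards [hg.coeFn_toLp, h ▸ Lp.coeFn_smul c (translateLp f hf n),
    coeFn_translateLp f hf n] with t hgt hct hft
  rw [← hgt, hct, Pi.smul_apply, hft, smul_eq_mul]

end Translates

theorem stmt15_general (p : ℝ → ℂ) (hp : MemLp p 2 (volume : Measure ℝ))
    (f₁ f₂ : ℝ → ℂ)
    (hf₁ : MemLp f₁ 2 (volume : Measure ℝ)) (hf₂ : MemLp f₂ 2 (volume : Measure ℝ))
    (hcs₁ : HasCompactSupport f₁) (hcs₂ : HasCompactSupport f₂)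
    (hne₁ : ¬ f₁ =ᵐ[volume] (fun _ => 0))
    (horth₁ : ∀ n m : ℤ, n ≠ m →
      (∫ t : ℝ, f₁ (t - n) * (starRingEnd ℂ) (f₁ (t - m))) = 0)
    (horth₂ : ∀ n m : ℤ, n ≠ m →
      (∫ t : ℝ, f₂ (t - n) * (starRingEnd ℂ) (f₂ (t - m))) = 0)
    (hspan₁ : spanTranslates f₁ hf₁ = spanTranslates p hp)
    (hspan₂ : spanTranslates f₂ hf₂ = spanTranslates p hp) :
    ∃ c : ℂ, c ≠ 0 ∧ ∃ n : ℤ, f₂ =ᵐ[volume] (fun t => c * f₁ (t - n)) := by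
  have horth₁' := pairwise_inner_translateLp_eq_zero hf₁ horth₁
  obtain ⟨a, ha⟩ := exists_laurentSMul_eq_of_hasCompactSupport hf₁ hf₂ hcs₁ hcs₂ horth₁'
    (by rw [hspan₁, ← hspan₂]; exact toLp_mem_spanTranslates hf₂)
  obtain ⟨b, hb⟩ := exists_laurentSMul_eq_of_hasCompactSupport hf₂ hf₁ hcs₂ hcs₁
    (pairwise_inner_translateLp_eq_zero hf₂ horth₂)
    (by rw [hspan₂, ← hspan₁]; exact toLp_mem_spanTranslates hf₁)
  have hli := linearIndependent_translateLp hf₁ hne₁ horth₁'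
  rw [translateLp_eq_translationLp] at hli
  have hba : b * a = 1 := laurentSMul_left_injective hli
    (show laurentSMul (b * a) _ = laurentSMul 1 _ by rw [laurentSMul_mul, ha, hb, laurentSMul_one])
  obtain ⟨n, c, rfl⟩ := exists_eq_single_of_mul_eq_one ((mul_comm a b).trans hba)
  refine ⟨c, fun hc => ?_, n, ae_eq_smul_translate_of_toLp_eq hf₁ hf₂ ?_⟩
  · rw [hc, single_zero, mul_zero] at hba
    exact zero_ne_one hba
  · rw [← ha, laurentSMul_single, translateLp_eq_translationLp]

/-- for compactly supported `p ∈ L²(ℝ)`, a compactly supported orthogonal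
generator of `S(p)` is unique up to an integer shift and a nonzero scalar: if `f₁, f₂` are
nonzero, compactly supported, have mutually orthogonal integer translates, and their
shift-invariant closed spans both equal `S(p)`, then `f₂ = c·f₁(·−n)` for some `c ≠ 0`,
`n ∈ ℤ`. -/
theorem stmt15 (p : ℝ → ℂ) (hp : MemLp p 2 (volume : Measure ℝ))
    (hcs : HasCompactSupport p)
    (f₁ f₂ : ℝ → ℂ)
    (hf₁ : MemLp f₁ 2 (volume : Measure ℝ)) (hf₂ : MemLp f₂ 2 (volume : Measure ℝ))
    (hcs₁ : HasCompactSupport f₁) (hcs₂ : HasCompactSupport f₂)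
    (hne₁ : ¬ f₁ =ᵐ[volume] (fun _ => 0)) (hne₂ : ¬ f₂ =ᵐ[volume] (fun _ => 0))
    (horth₁ : ∀ n m : ℤ, n ≠ m →
      (∫ t : ℝ, f₁ (t - n) * (starRingEnd ℂ) (f₁ (t - m))) = 0)
    (horth₂ : ∀ n m : ℤ, n ≠ m →
      (∫ t : ℝ, f₂ (t - n) * (starRingEnd ℂ) (f₂ (t - m))) = 0)
    (hspan₁ : spanTranslates f₁ hf₁ = spanTranslates p hp)
    (hspan₂ : spanTranslates f₂ hf₂ = spanTranslates p hp) :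
    ∃ c : ℂ, c ≠ 0 ∧ ∃ n : ℤ, f₂ =ᵐ[volume] (fun t => c * f₁ (t - n)) :=
  stmt15_general p hp f₁ f₂ hf₁ hf₂ hcs₁ hcs₂ hne₁ horth₁ horth₂ hspan₁ hspan₂
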